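/- arXiv:2508.14356 — 2 statements merged into one kernel-verified Lean document; each statement's English description precedes it below -/
import Mathlib

section
/- If a graph G contains a clique K of size at least s containing vertex q (s ≥ 3), then there exists a vertex set V* of size exactly s containing q whose induced subgraph is a triangle-connected s-truss: every edge lies in at least s-2 triangles, and any two triangles are connected by a sequence of triangles in which consecutive triangles share an edge. -/
variable {V : Type*} [Fintype V] [DecidableEq V]

def IsTriangle (G : SimpleGraph V) (t : Finset V) : Prop :=
  t.card = 3 ∧ ∀ a ∈ t, ∀ b ∈ t, a ≠ b → G.Adj a b

/-- A triangle of the subgraph induced by the vertex set `T`. -/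
def TriWithin (G : SimpleGraph V) (T : Finset V) (t : Finset V) : Prop :=
  t ⊆ T ∧ IsTriangle G t

instance (G : SimpleGraph V) [DecidableRel G.Adj] (T t : Finset V) :
    Decidable (TriWithin G T t) := by unfold TriWithin IsTriangle; infer_instance

/-- Number of triangles within `T` containing the edge `{u,v}`. -/
def supT (G : SimpleGraph V) [DecidableRel G.Adj] (T : Finset V) (u v : V) : ℕ :=
  (Finset.univ.filter (fun t : Finset V => TriWithin G T t ∧ u ∈ t ∧ v ∈ t)).card

/-- If `G` contains a clique `K` of size at least `s ≥ 3` containing `q`, then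
there is a vertex set of size exactly `s` containing `q` which induces a
triangle-connected `s`-truss. -/
theorem stmt6 (G : SimpleGraph V) [DecidableRel G.Adj] (q : V) (s : ℕ) (hs : 3 ≤ s)
    (K : Finset V) (hKcard : s ≤ K.card) (hq : q ∈ K)
    (hclique : ∀ u ∈ K, ∀ v ∈ K, u ≠ v → G.Adj u v) :
    ∃ T : Finset V, T.card = s ∧ q ∈ T ∧
      (∀ u ∈ T, ∀ v ∈ T, G.Adj u v → s - 2 ≤ supT G T u v) ∧
      (∀ t t' : Finset V, TriWithin G T t → TriWithin G T t' →
        Relation.ReflTransGen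
          (fun a b : Finset V => TriWithin G T a ∧ TriWithin G T b ∧ (a ∩ b).card = 2)
          t t') := by
  obtain ⟨T, hqT, hTK, hTcard⟩ :=
    Finset.exists_subsuperset_card_eq (Finset.singleton_subset_iff.mpr hq)
      (by simp; omega) hKcard
  have hqT : q ∈ T := hqT (Finset.mem_singleton_self q)
  have hT : ∀ u ∈ T, ∀ v ∈ T, u ≠ v → G.Adj u v :=
    fun u hu v hv h => hclique u (hTK hu) v (hTK hv) h
  refine ⟨T, hTcard, hqT, ?_, ?_⟩
  · intro u hu v hv huv
    have hne : u ≠ v := huv.ne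
    have hsub : {u, v} ⊆ T := by
      intro x hx; rcases Finset.mem_insert.mp hx with h | h
      · exact h ▸ hu
      · exact (Finset.mem_singleton.mp h) ▸ hv
    have hcard2 : ({u, v} : Finset V).card = 2 := by
      rw [Finset.card_insert_of_notMem (by simp [hne]), Finset.card_singleton]
    have hkey : (T \ {u, v}).card ≤ supT G T u v := by
      apply Finset.card_le_card_of_injOn (fun w => {u, v, w})
      · intro w hw
        simp only [Finset.mem_coe, Finset.mem_sdiff, Finset.mem_insert, Finset.mem_singleton] at hw
        obtain ⟨hwT, hwuv⟩ := hw
        push_neg at hwuv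
        simp only [Finset.mem_coe, Finset.mem_filter, Finset.mem_univ, true_and]
        have hsubT : ({u, v, w} : Finset V) ⊆ T := by
          intro x hx
          simp only [Finset.mem_insert, Finset.mem_singleton] at hx
          rcases hx with h | h | h
          · exact h ▸ hu
          · exact h ▸ hv
          · exact h ▸ hwT
        refine ⟨⟨hsubT, ?_, fun a ha b hb hab => hT a (hsubT ha) b (hsubT hb) hab⟩,
          by simp, by simp⟩
        rw [Finset.card_insert_of_notMem (by simp [hne, Ne.symm hwuv.1]),
          Finset.card_insert_of_notMem (by simp [Ne.symm hwuv.2]), Finset.card_singleton]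
      · intro a ha b hb hab
        simp only [Finset.mem_coe, Finset.mem_sdiff, Finset.mem_insert,
          Finset.mem_singleton] at ha hb
        push_neg at ha hb
        have : a ∈ ({u, v, b} : Finset V) := by
          simp only at hab
          rw [← hab]; simp
        simp only [Finset.mem_insert, Finset.mem_singleton] at this
        rcases this with h | h | h
        · exact absurd h ha.2.1
        · exact absurd h ha.2.2
        · exact h
    calc s - 2 = (T \ {u, v}).card := by rw [Finset.card_sdiff_of_subset hsub, hcard2, hTcard]
    _ ≤ supT G T u v := hkey
  · have key : ∀ n (t t' : Finset V), (t \ t').card = n → TriWithin G T t → TriWithin G T t' →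
        Relation.ReflTransGen
          (fun a b : Finset V => TriWithin G T a ∧ TriWithin G T b ∧ (a ∩ b).card = 2) t t' := by
      intro n
      induction n with
      | zero =>
        intro t t' h ht ht'
        have heq : t = t' :=
          Finset.eq_of_subset_of_card_le
            (Finset.sdiff_eq_empty_iff_subset.mp (Finset.card_eq_zero.mp h))
            (by rw [ht.2.1, ht'.2.1])
        exact heq ▸ Relation.ReflTransGen.refl
      | succ n ih =>
        intro t t' h ht ht'
        obtain ⟨a, ha⟩ : (t \ t').Nonempty := by rw [← Finset.card_pos, h]; omega
        obtain ⟨b, hb⟩ : (t' \ t).Nonempty := by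
          rw [← Finset.card_pos, Finset.card_sdiff_comm (by rw [ht'.2.1, ht.2.1]), h]; omega
        simp only [Finset.mem_sdiff] at ha hb
        set t'' := insert b (t.erase a) with ht''def
        have hbne : b ∉ t.erase a := fun hh => hb.2 (Finset.mem_of_mem_erase hh)
        have ht''T : t'' ⊆ T := by
          intro x hx
          rcases Finset.mem_insert.mp hx with h' | h'
          · exact ht'.1 (h' ▸ hb.1)
          · exact ht.1 (Finset.mem_of_mem_erase h')
        have ht''tri : TriWithin G T t'' := by
          refine ⟨ht''T, ?_, fun x hx y hy hxy => hT x (ht''T hx) y (ht''T hy) hxy⟩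
          rw [ht''def, Finset.card_insert_of_notMem hbne,
            Finset.card_erase_of_mem ha.1, ht.2.1]
        have hstep : TriWithin G T t ∧ TriWithin G T t'' ∧ (t ∩ t'').card = 2 := by
          refine ⟨ht, ht''tri, ?_⟩
          have : t ∩ t'' = t.erase a := by
            ext x
            simp only [ht''def, Finset.mem_inter, Finset.mem_insert, Finset.mem_erase]
            constructor
            · rintro ⟨hxt, h' | h'⟩
              · exact absurd (h' ▸ hxt) hb.2
              · exact ⟨h'.1, hxt⟩
            · rintro ⟨hxa, hxt⟩; exact ⟨hxt, Or.inr ⟨hxa, hxt⟩⟩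
          rw [this, Finset.card_erase_of_mem ha.1, ht.2.1]
        have hrest : (t'' \ t').card = n := by
          have : t'' \ t' = (t \ t').erase a := by
            ext x
            simp only [ht''def, Finset.mem_sdiff, Finset.mem_insert, Finset.mem_erase]
            constructor
            · rintro ⟨h' | h', hxt'⟩
              · exact absurd (h' ▸ hb.1) hxt'
              · exact ⟨h'.1, h'.2, hxt'⟩
            · rintro ⟨hxa, hxt, hxt'⟩
              exact ⟨Or.inr ⟨hxa, hxt⟩, hxt'⟩
          rw [this, Finset.card_erase_of_mem (Finset.mem_sdiff.mpr ha), h]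
          omega
        exact Relation.ReflTransGen.head hstep (ih t'' t' hrest ht''tri ht')
    intro t t' ht ht'
    exact key _ t t' rfl ht ht'
end

section
/- Branching soundness of edge-dominance: Let G be a simple graph, and u, v vertices with N(v) ⊆ N(u) (u edge-dominates v), u ∉ S, v ∈ S for a vertex set S. Then the set S' = (S \ {v}) ∪ {u} satisfies: for every edge e of G[S] not incident to v, e is an edge of G[S'], and every triangle of G[S] containing v corresponds to a triangle of G[S'] containing u. Consequently, the number of triangles in G[S'] is at least the number of triangles in G[S]. -/
variable {V : Type*} [Fintype V] [DecidableEq V]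

instance (G : SimpleGraph V) [DecidableRel G.Adj] (t : Finset V) :
    Decidable (IsTriangle G t) := by unfold IsTriangle; infer_instance

/-- Branching soundness of edge-dominance: if `u` edge-dominates `v`
(`N(v) \ {u} ⊆ N(u) \ {v}`), `u ∉ S` and `v ∈ S`, then with
`S' = (S \ {v}) ∪ {u}`: every edge of `G[S]` not incident to `v` is an edge of
`G[S']`; every triangle of `G[S]` containing `v` yields a triangle of `G[S']`
containing `u`; and `G[S']` has at least as many triangles as `G[S]`. -/
theorem stmt8 (G : SimpleGraph V) [DecidableRel G.Adj] (u v : V)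
    (hdom : G.neighborFinset v \ {u} ⊆ G.neighborFinset u \ {v})
    (S : Finset V) (hu : u ∉ S) (hv : v ∈ S) :
    (∀ a ∈ S, ∀ b ∈ S, a ≠ v → b ≠ v → G.Adj a b →
      a ∈ insert u (S.erase v) ∧ b ∈ insert u (S.erase v)) ∧
    (∀ t : Finset V, t ⊆ S → IsTriangle G t → v ∈ t →
      insert u (t.erase v) ⊆ insert u (S.erase v) ∧
      IsTriangle G (insert u (t.erase v)) ∧ u ∈ insert u (t.erase v)) ∧
    (Finset.univ.filter (fun t : Finset V => t ⊆ S ∧ IsTriangle G t)).card ≤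
      (Finset.univ.filter
        (fun t : Finset V => t ⊆ insert u (S.erase v) ∧ IsTriangle G t)).card := by
  have hdom' : ∀ w, G.Adj v w → w ≠ u → G.Adj u w := by
    intro w hw hwu
    have : w ∈ G.neighborFinset v \ {u} := by
      simp [SimpleGraph.mem_neighborFinset, hw, hwu]
    have := hdom this
    simp [SimpleGraph.mem_neighborFinset] at this
    exact this.1
  -- key: triangles containing v map to triangles containing u
  have key : ∀ t : Finset V, t ⊆ S → IsTriangle G t → v ∈ t →
      insert u (t.erase v) ⊆ insert u (S.erase v) ∧
      IsTriangle G (insert u (t.erase v)) ∧ u ∈ insert u (t.erase v) := by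
    intro t htS ⟨hcard, hadj⟩ hvt
    have hut : u ∉ t := fun h => hu (htS h)
    have hue : u ∉ t.erase v := fun h => hut (Finset.mem_of_mem_erase h)
    refine ⟨?_, ⟨?_, ?_⟩, Finset.mem_insert_self _ _⟩
    · intro x hx
      rcases Finset.mem_insert.mp hx with h | h
      · exact h ▸ Finset.mem_insert_self _ _
      · exact Finset.mem_insert_of_mem
          (Finset.mem_erase.mpr ⟨(Finset.mem_erase.mp h).1, htS (Finset.mem_of_mem_erase h)⟩)
    · rw [Finset.card_insert_of_notMem hue, Finset.card_erase_of_mem hvt, hcard]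
    · intro a ha b hb hab
      rcases Finset.mem_insert.mp ha with ha' | ha' <;>
        rcases Finset.mem_insert.mp hb with hb' | hb'
      · exact absurd (ha'.trans hb'.symm) hab
      · subst ha'
        obtain ⟨hbv, hbt⟩ := Finset.mem_erase.mp hb'
        exact hdom' b ((hadj v hvt b hbt (Ne.symm hbv)))
          (fun h => hue (h ▸ hb'))
      · subst hb'
        obtain ⟨hav, hat⟩ := Finset.mem_erase.mp ha'
        exact (hdom' a ((hadj v hvt a hat (Ne.symm hav)))
          (fun h => hue (h ▸ ha'))).symm
      · exact hadj a (Finset.mem_of_mem_erase ha') b (Finset.mem_of_mem_erase hb') hab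
  refine ⟨?_, key, ?_⟩
  · intro a ha b hb hav hbv _
    exact ⟨Finset.mem_insert_of_mem (Finset.mem_erase.mpr ⟨hav, ha⟩),
      Finset.mem_insert_of_mem (Finset.mem_erase.mpr ⟨hbv, hb⟩)⟩
  · apply Finset.card_le_card_of_injOn
      (fun t => if v ∈ t then insert u (t.erase v) else t)
    · intro t ht
      simp only [Finset.mem_coe, Finset.mem_filter, Finset.mem_univ, true_and] at ht ⊢
      obtain ⟨htS, htri⟩ := ht
      by_cases hvt : v ∈ t
      · simp only [if_pos hvt]
        obtain ⟨h1, h2, _⟩ := key t htS htri hvt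
        exact ⟨h1, h2⟩
      · simp only [if_neg hvt]
        refine ⟨?_, htri⟩
        intro x hx
        exact Finset.mem_insert_of_mem
          (Finset.mem_erase.mpr ⟨fun h => hvt (h ▸ hx), htS hx⟩)
    · intro t1 h1 t2 h2 heq
      simp only [Finset.coe_filter, Set.mem_setOf_eq, Finset.mem_univ, true_and] at h1 h2
      have hu1 : u ∉ t1 := fun h => hu (h1.1 h)
      have hu2 : u ∉ t2 := fun h => hu (h2.1 h)
      by_cases hv1 : v ∈ t1 <;> by_cases hv2 : v ∈ t2
      · simp only [hv1, hv2, if_true] at heq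
        have e1 : u ∉ t1.erase v := fun h => hu1 (Finset.mem_of_mem_erase h)
        have e2 : u ∉ t2.erase v := fun h => hu2 (Finset.mem_of_mem_erase h)
        have : t1.erase v = t2.erase v := by
          have := congrArg (Finset.erase · u) heq
          simpa [Finset.erase_insert e1, Finset.erase_insert e2] using this
        have := congrArg (insert v) this
        rwa [Finset.insert_erase hv1, Finset.insert_erase hv2] at this
      · simp only [hv1, hv2, if_true, if_false] at heq
        exact absurd (heq ▸ Finset.mem_insert_self u _) hu2
      · simp only [hv1, hv2, if_true, if_false] at heq
        exact absurd (heq ▸ Finset.mem_insert_self u _ : u ∈ t1) hu1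
      · simpa only [hv1, hv2, if_false] using heq
end
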